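/- Let $x_1,\dots,x_I \in \mathbb{R}^n$ and let $A$ be the $n \times I$ matrix whose columns are the $x_i$. Among all orthogonal projections $P \in \mathbb{R}^{n\times n}$ of rank at most $d$, the quantity $\sum_{i=1}^I \|Px_i - x_i\|^2$ is minimized by $P = U_d U_d^T$, where $U_d$ is the matrix of the first $d$ left singular vectors of $A$. -/

import Mathlib

/-!
For an orthogonal projection `P`, `∑ i ‖P xᵢ - xᵢ‖² = ‖A‖_F² - tr (P A Aᵀ)`, and writing
`A Aᵀ = U diag(σ²) Uᵀ` the subtracted term becomes `∑ σᵢ² mᵢ`, where the `mᵢ` are the diagonal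
entries of the orthogonal projection `Uᵀ P U`. They lie in `[0, 1]` and sum to
`tr (Uᵀ P U) = rank (Uᵀ P U) ≤ d`, so, the `σᵢ²` being nonincreasing,
`∑ σᵢ² mᵢ ≤ σ₁² + ⋯ + σ_d²`. For `P = U_d U_dᵀ` the `mᵢ` are `1` for the first `d` indices and
`0` after, so the bound is attained.
-/
open Matrix Finset

variable {m n o : Type*}

namespace Matrix

theorem trace_eq_rank_of_isIdempotentElem {K : Type*} [Field K] [Fintype n] [DecidableEq n]
    {P : Matrix n n K} (hP : IsIdempotentElem P) : P.trace = P.rank := by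
  rw [← trace_toLin'_eq]
  exact (LinearMap.IsIdempotentElem.isProj_range _ (hP.map toLinAlgEquiv')).trace

section CommRing

variable {R : Type*} [CommRing R]

theorem sum_sq_mulVec_sub_eq_trace_sub [Fintype m] [Fintype n] {Q : Matrix m m R}
    (hQs : Q.IsSymm) (hQ : IsIdempotentElem Q) (A : Matrix m n R) :
    ∑ i, ∑ j, ((Q *ᵥ fun k => A k i) j - A j i) ^ 2 =
      (Aᵀ * A).trace - (Q * (A * Aᵀ)).trace := by
  have hsum : ∑ i, ∑ j, ((Q *ᵥ fun k => A k i) j - A j i) ^ 2 =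
      ((Q * A - A)ᵀ * (Q * A - A)).trace := by
    simp only [trace, diag, mul_apply, transpose_apply, sub_apply, mulVec, dotProduct, sq]
  have hexpand : (Q * A - A)ᵀ * (Q * A - A) = Aᵀ * A - Aᵀ * Q * A := by
    rw [transpose_sub, transpose_mul, hQs.eq, Matrix.sub_mul, Matrix.mul_sub, Matrix.mul_sub,
      Matrix.mul_assoc, ← Matrix.mul_assoc Q Q, hQ.eq, ← Matrix.mul_assoc]
    abel
  rw [hsum, hexpand, trace_sub, trace_mul_comm (Aᵀ * Q), ← Matrix.mul_assoc,
    trace_mul_comm (A * Aᵀ)]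

theorem trace_mul_svd_mul_transpose [Fintype m] [Fintype n] [DecidableEq m] [DecidableEq n]
    {U : Matrix m m R} {S : Matrix m n R} {V : Matrix n n R} {t : m → R}
    (hV : Vᵀ * V = 1) (hS : S * Sᵀ = diagonal t) (Q : Matrix m m R) :
    (Q * (U * S * Vᵀ * (U * S * Vᵀ)ᵀ)).trace = ∑ i, (Uᵀ * Q * U) i i * t i := by
  have hAAt : U * S * Vᵀ * (U * S * Vᵀ)ᵀ = U * diagonal t * Uᵀ := by
    simp only [transpose_mul, transpose_transpose, Matrix.mul_assoc]
    rw [← Matrix.mul_assoc Vᵀ V, hV, Matrix.one_mul, ← Matrix.mul_assoc S, hS]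
  rw [hAAt, ← Matrix.mul_assoc, trace_mul_comm, ← Matrix.mul_assoc, ← Matrix.mul_assoc]
  simp only [trace, diag, mul_diagonal]

theorem IsSymm.transpose_mul_mul [Fintype m] {P : Matrix m m R} (hP : P.IsSymm)
    (U : Matrix m n R) : (Uᵀ * P * U).IsSymm := by
  simp only [IsSymm, transpose_mul, transpose_transpose, hP.eq, Matrix.mul_assoc]

theorem isIdempotentElem_transpose_mul_mul [Fintype m] [DecidableEq m] {P U : Matrix m m R}
    (hU : U * Uᵀ = 1) (hP : IsIdempotentElem P) : IsIdempotentElem (Uᵀ * P * U) := by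
  calc Uᵀ * P * U * (Uᵀ * P * U) = Uᵀ * (P * (U * Uᵀ) * P) * U := by
        simp only [Matrix.mul_assoc]
    _ = Uᵀ * P * U := by rw [hU, Matrix.mul_one, hP.eq]

theorem isSymm_mul_transpose [Fintype n] (W : Matrix m n R) : (W * Wᵀ).IsSymm := by
  rw [IsSymm, transpose_mul, transpose_transpose]

theorem isIdempotentElem_mul_transpose [Fintype m] [Fintype n] [DecidableEq n] {W : Matrix m n R}
    (hW : Wᵀ * W = 1) : IsIdempotentElem (W * Wᵀ) := by
  rw [IsIdempotentElem, Matrix.mul_assoc, ← Matrix.mul_assoc Wᵀ, hW, Matrix.one_mul]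

variable [Fintype m] [DecidableEq m] {U : Matrix m m R}

theorem transpose_mul_submatrix_id_of_transpose_mul_self [DecidableEq o] (hU : Uᵀ * U = 1)
    {e : o → m} (he : Function.Injective e) : (U.submatrix id e)ᵀ * U.submatrix id e = 1 := by
  rw [transpose_submatrix, ← submatrix_mul _ _ _ _ _ Function.bijective_id, hU, submatrix_one _ he]

theorem sum_diag_transpose_mul_mul_submatrix [Fintype o] (hU : Uᵀ * U = 1) (e : o → m)
    (t : m → R) :
    ∑ i, (Uᵀ * (U.submatrix id e * (U.submatrix id e)ᵀ) * U) i i * t i = ∑ k, t (e k) := by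
  have hE : Uᵀ * U.submatrix id e = (1 : Matrix m m R).submatrix id e := by rw [← hU]; rfl
  have hconj : Uᵀ * (U.submatrix id e * (U.submatrix id e)ᵀ) * U =
      (Uᵀ * U.submatrix id e) * (Uᵀ * U.submatrix id e)ᵀ := by
    simp only [transpose_mul, transpose_transpose, Matrix.mul_assoc]
  rw [hconj, hE]
  simp only [mul_apply, transpose_apply, submatrix_apply, id, one_apply, sum_mul]
  rw [sum_comm]
  refine sum_congr rfl fun k _ => ?_
  simp

end CommRing

end Matrix

theorem Fin.sum_castLE_eq_sum_filter_lt {M : Type*} [AddCommMonoid M] {n d : ℕ} (hd : d ≤ n)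
    (f : Fin n → M) : ∑ k : Fin d, f (Fin.castLE hd k) = ∑ i : Fin n with i.val < d, f i := by
  have himage : ({i : Fin n | i.val < d} : Finset _) = univ.map (Fin.castLEEmb hd) := by
    ext i
    simp [Fin.castLEEmb, ← Set.mem_range, Fin.range_castLE]
  rw [himage, sum_map]
  rfl

section Order

variable {K : Type*} [Field K] [LinearOrder K] [IsStrictOrderedRing K]

theorem Matrix.IsSymm.diag_mem_Icc_of_isIdempotentElem [Fintype n] {M : Matrix n n K}
    (hs : M.IsSymm) (hi : IsIdempotentElem M) (i : n) : M i i ∈ Set.Icc 0 1 := by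
  have hrow : M i i = ∑ k, M i k ^ 2 := by
    conv_lhs => rw [← hi.eq]
    simp only [mul_apply, sq, hs.apply i]
  have hsq : M i i ^ 2 ≤ M i i :=
    calc M i i ^ 2 ≤ ∑ k, M i k ^ 2 := single_le_sum (fun k _ => sq_nonneg (M i k)) (mem_univ i)
      _ = M i i := hrow.symm
  constructor <;> nlinarith

theorem Fin.sum_mul_le_sum_filter_lt {n d : ℕ} (hd : d ≤ n) {w t : Fin n → K}
    (hw : ∀ i, w i ∈ Set.Icc 0 1) (hw_sum : ∑ i, w i ≤ d) (ht : Antitone t) (ht0 : 0 ≤ t) :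
    ∑ i, w i * t i ≤ ∑ i with i.val < d, t i := by
  obtain ⟨s, hs0, hs_le, hs_ge⟩ : ∃ s : K, 0 ≤ s ∧ (∀ i : Fin n, i.val < d → s ≤ t i) ∧
      ∀ i : Fin n, d ≤ i.val → t i ≤ s := by
    rcases hd.lt_or_eq with hlt | rfl
    · exact ⟨t ⟨d, hlt⟩, ht0 _, fun i hi => ht (Fin.mk_le_of_le_val hi.le),
        fun i hi => ht (Fin.mk_le_of_le_val hi)⟩
    · exact ⟨0, le_rfl, fun i _ => ht0 i, fun i hi => absurd i.isLt (not_lt.2 hi)⟩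
  have hterm : ∀ i : Fin n, w i * t i - (if i.val < d then t i else 0) ≤
      s * (w i - if i.val < d then 1 else 0) := by
    intro i
    split_ifs with hi
    · nlinarith [hs_le i hi, (hw i).2]
    · nlinarith [hs_ge i (not_lt.1 hi), (hw i).1]
  have hcard : ∑ i : Fin n, (if i.val < d then (1 : K) else 0) = d := by
    rw [sum_boole, Fin.card_filter_val_lt, min_eq_right hd]
  have hsum := sum_le_sum fun i (_ : i ∈ univ) => hterm i
  rw [sum_sub_distrib, ← mul_sum, sum_sub_distrib, hcard, ← sum_filter] at hsum
  nlinarith [mul_nonneg hs0 (sub_nonneg.2 hw_sum)]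

theorem Matrix.sum_diag_mul_le_of_isIdempotentElem {n d : ℕ} (hd : d ≤ n)
    {M : Matrix (Fin n) (Fin n) K} (hs : M.IsSymm) (hi : IsIdempotentElem M) (hr : M.rank ≤ d)
    {t : Fin n → K} (ht : Antitone t) (ht0 : 0 ≤ t) :
    ∑ i, M i i * t i ≤ ∑ i with i.val < d, t i :=
  Fin.sum_mul_le_sum_filter_lt hd (hs.diag_mem_Icc_of_isIdempotentElem hi)
    (by
      change M.trace ≤ d
      rw [trace_eq_rank_of_isIdempotentElem hi]
      exact_mod_cast hr) ht ht0

end Order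

section RectangularDiagonal

variable {n I : ℕ}

theorem Matrix.isDiag_mul_transpose_of_offDiag_eq_zero {R : Type*} [Semiring R]
    {S : Matrix (Fin n) (Fin I) R}
    (hS : ∀ (i : Fin n) (j : Fin I), (i : ℕ) ≠ (j : ℕ) → S i j = 0) : (S * Sᵀ).IsDiag := by
  intro i k hik
  rw [mul_apply]
  refine sum_eq_zero fun j _ => ?_
  by_cases hij : (i : ℕ) = j
  · rw [transpose_apply, hS k j (fun hkj => hik (Fin.ext (hij.trans hkj.symm))), mul_zero]
  · rw [hS i j hij, zero_mul]

variable {K : Type*} [Field K] [LinearOrder K] [IsStrictOrderedRing K]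

theorem Matrix.diag_mul_transpose_nonneg (S : Matrix (Fin n) (Fin I) K) : 0 ≤ (S * Sᵀ).diag :=
  fun i => sum_nonneg (s := univ) fun j _ => mul_self_nonneg (S i j)

theorem Matrix.antitone_diag_mul_transpose {S : Matrix (Fin n) (Fin I) K}
    (hS : ∀ (i : Fin n) (j : Fin I), (i : ℕ) ≠ (j : ℕ) → S i j = 0)
    (hnonneg : ∀ (i : Fin n) (j : Fin I), (i : ℕ) = (j : ℕ) → 0 ≤ S i j)
    (hmono : ∀ (i i' : Fin n) (j j' : Fin I), (i : ℕ) = (j : ℕ) → (i' : ℕ) = (j' : ℕ) →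
      (i : ℕ) ≤ (i' : ℕ) → S i' j' ≤ S i j) :
    Antitone (S * Sᵀ).diag := by
  have hrow : ∀ (i : Fin n) (j : Fin I), (i : ℕ) = (j : ℕ) → (S * Sᵀ).diag i = S i j ^ 2 := by
    intro i j hij
    rw [diag_apply, mul_apply, sum_eq_single j (fun j' _ hj' => ?_) (by simp), sq]
    · rfl
    · rw [hS i j' (fun h => hj' (Fin.ext (h.symm.trans hij))), zero_mul]
  intro i i' hii'
  by_cases hi' : (i' : ℕ) < I
  · have hi : (i : ℕ) < I := lt_of_le_of_lt hii' hi'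
    rw [hrow i ⟨i, hi⟩ rfl, hrow i' ⟨i', hi'⟩ rfl]
    exact pow_le_pow_left₀ (hnonneg _ _ rfl) (hmono _ _ _ _ rfl rfl hii') 2
  · have hzero : (S * Sᵀ).diag i' = 0 := by
      rw [diag_apply, mul_apply]
      exact sum_eq_zero fun j _ => by rw [hS i' j (by omega), zero_mul]
    exact hzero ▸ diag_mul_transpose_nonneg S i

end RectangularDiagonal

/-- **PCA optimality / Eckart–Young.** Among all orthogonal projections `P` (symmetric
idempotent matrices) of rank at most `d`, the quantity `∑ i ‖P xᵢ - xᵢ‖²` (where the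
`xᵢ` are the columns of `A`) is minimized by `P = Ud * Udᵀ`, where `Ud` consists of the
first `d` left singular vectors of `A` (from an SVD `A = U S Vᵀ` with nonincreasing
nonnegative diagonal `S`). -/
theorem pca_projection_optimal {n I d : ℕ} (hd : d ≤ n)
    (A : Matrix (Fin n) (Fin I) ℝ)
    (U : Matrix (Fin n) (Fin n) ℝ) (S : Matrix (Fin n) (Fin I) ℝ)
    (V : Matrix (Fin I) (Fin I) ℝ)
    (hU : Uᵀ * U = 1) (hV : Vᵀ * V = 1)
    (hSVD : A = U * S * Vᵀ)
    (hdiag : ∀ (i : Fin n) (j : Fin I), (i : ℕ) ≠ (j : ℕ) → S i j = 0)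
    (hnonneg : ∀ (i : Fin n) (j : Fin I), (i : ℕ) = (j : ℕ) → 0 ≤ S i j)
    (hmono : ∀ (i i' : Fin n) (j j' : Fin I), (i : ℕ) = (j : ℕ) → (i' : ℕ) = (j' : ℕ) →
      (i : ℕ) ≤ (i' : ℕ) → S i' j' ≤ S i j)
    (Ud : Matrix (Fin n) (Fin d) ℝ) (hUd : Ud = U.submatrix id (Fin.castLE hd)) :
    ∀ P : Matrix (Fin n) (Fin n) ℝ, Pᵀ = P → P * P = P → P.rank ≤ d →
      (∑ i : Fin I, ∑ j : Fin n,
          ((Ud * Udᵀ).mulVec (fun k => A k i) j - A j i) ^ 2) ≤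
        ∑ i : Fin I, ∑ j : Fin n, (P.mulVec (fun k => A k i) j - A j i) ^ 2 := by
  intro P hPs hPi hPr
  subst hSVD
  have hSS : S * Sᵀ = diagonal (S * Sᵀ).diag :=
    (isDiag_mul_transpose_of_offDiag_eq_zero hdiag).diagonal_diag.symm
  have hUdUd : IsIdempotentElem (Ud * Udᵀ) := isIdempotentElem_mul_transpose
    (hUd ▸ transpose_mul_submatrix_id_of_transpose_mul_self hU (Fin.castLE_injective hd))
  rw [sum_sq_mulVec_sub_eq_trace_sub hPs hPi,
    sum_sq_mulVec_sub_eq_trace_sub (isSymm_mul_transpose Ud) hUdUd,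
    trace_mul_svd_mul_transpose hV hSS, trace_mul_svd_mul_transpose hV hSS]
  refine sub_le_sub_left ?_ _
  calc ∑ i, (Uᵀ * P * U) i i * (S * Sᵀ).diag i
      ≤ ∑ i with i.val < d, (S * Sᵀ).diag i :=
        sum_diag_mul_le_of_isIdempotentElem hd (IsSymm.transpose_mul_mul hPs U)
          (isIdempotentElem_transpose_mul_mul (mul_eq_one_comm.1 hU) hPi)
          ((rank_mul_le_left _ _).trans ((rank_mul_le_right _ _).trans hPr))
          (antitone_diag_mul_transpose hdiag hnonneg hmono) (diag_mul_transpose_nonneg S)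
    _ = _ := by
      rw [hUd, ← Fin.sum_castLE_eq_sum_filter_lt hd, sum_diag_transpose_mul_mul_submatrix hU]
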